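/- Let B = (b₁,…,b_k) be a digit block of length k ≥ 1 and let ℓ ≥ k. If b₁ ≠ 0, then occ_no(B, s_ℓ) = 10^{ℓ−k} + (ℓ−k)·9·10^{ℓ−k−1}; if b₁ = 0, then occ_no(B, s_ℓ) = (ℓ−k)·9·10^{ℓ−k−1}. (When ℓ = k the term (ℓ−k)·9·10^{ℓ−k−1} is 0.) -/

import Mathlib

/-!
For a starting position `j` of the block, let `e = ℓ - k + 1 - j` be the number of digits
of `y` to its right. The block occurs at `j` exactly when `⌊y / 10^e⌋ ≡ m (mod 10^k)`, where
`m` is the number whose `k`-digit decimal representation (leading zeros allowed) is `B`.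
When `e + k < ℓ` this condition is periodic in `y` with period `10^(e+k)`, and the `ℓ`-digit
numbers form `9·10^(ℓ-k-1-e)` full periods, each containing `10^e` solutions. When
`e + k = ℓ` the condition fixes the first `k` digits of `y` to be `B`, which is possible only
if `b₁ ≠ 0`, and then leaves `10^e = 10^(ℓ-k)` choices.
-/
open scoped Classical

/-- The `i`-th decimal digit (for `i ≥ 1`) of a real number `α`, using the floor
convention, which for numbers admitting two decimal expansions selects the
expansion ending in a tail of `0`s. -/
noncomputable def digit (α : ℝ) (i : ℕ) : ℕ := (⌊α * 10 ^ i⌋ % 10).toNat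

/-- Number of occurrences of the digit block `B` (of length `k`) as consecutive
digits among the first `N` decimal digits of `α`:
`occ α B N = #{i : 1 ≤ i ≤ N - k + 1 ∧ (α_i, …, α_{i+k-1}) = B}`. -/
noncomputable def occ {k : ℕ} (α : ℝ) (B : Fin k → Fin 10) (N : ℕ) : ℕ :=
  ((Finset.Icc 1 N).filter fun i =>
    i + k ≤ N + 1 ∧ ∀ j : Fin k, digit α (i + (j : ℕ)) = (B j : ℕ)).card

/-- Discrepancy of the first `N` terms of a sequence `(x_n)_{n ≥ 1}` of points of `[0,1)`:
the supremum over `0 ≤ a < b < 1` of `|#{n ≤ N : x n ∈ [a,b)}/N - (b - a)|`. -/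
noncomputable def discSeq (x : ℕ → ℝ) (N : ℕ) : ℝ :=
  sSup {d : ℝ | ∃ a b : ℝ, 0 ≤ a ∧ a < b ∧ b < 1 ∧
    d = |(((Finset.Icc 1 N).filter fun n => x n ∈ Set.Ico a b).card : ℝ) / N - (b - a)|}

/-- Discrepancy of a real number for base 10: the discrepancy of the sequence
`(10^(n-1) α mod 1)_{n ≥ 1}`. -/
noncomputable def D (α : ℝ) (N : ℕ) : ℝ :=
  discSeq (fun n => Int.fract (10 ^ (n - 1) * α)) N

/-- `T v` is the total number of digits in the concatenation of the decimal
representations of `1, 2, …, v`. -/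
def T (v : ℕ) : ℕ := ∑ j ∈ Finset.Icc 1 v, (Nat.digits 10 j).length

/-- The Champernowne constant `c = 0.123456789101112…`, the concatenation of the
positive integers in base 10: the term `m` ends at decimal position `T m`. -/
noncomputable def champ : ℝ := ∑' m : ℕ, (m : ℝ) / 10 ^ T m

/-- `vOf N` is the least `v` with `T v ≥ N` (the term of the concatenation
containing the `N`-th digit). -/
noncomputable def vOf (N : ℕ) : ℕ := sInf {v | N ≤ T v}

/-- `nOf N` is the number of decimal digits of `vOf N`. -/
noncomputable def nOf (N : ℕ) : ℕ := (Nat.digits 10 (vOf N)).length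

/-- Number of non-overlapping occurrences of the block `B` (length `k`) in the string
`s_ℓ` (the concatenation of all `ℓ`-digit integers in increasing order): the number of
pairs `(y, j)` with `10^(ℓ-1) ≤ y < 10^ℓ`, `1 ≤ j ≤ ℓ - k + 1`, such that the digits of
`y` in positions `j, …, j + k - 1` (counted from the left) equal `B`. -/
def occNoSeg {k : ℕ} (B : Fin k → Fin 10) (ℓ : ℕ) : ℕ :=
  ((Finset.Ico (10 ^ (ℓ - 1)) (10 ^ ℓ) ×ˢ Finset.Icc 1 (ℓ - k + 1)).filter fun p =>
    ∀ i : Fin k, p.1 / 10 ^ (ℓ - (p.2 + (i : ℕ))) % 10 = (B i : ℕ)).card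

/-- Number of occurrences of the block `B` (length `k ≤ ℓ`) in the string `s_ℓ` that
straddle the boundary between two consecutive `ℓ`-digit terms `y` and `y + 1`:
the number of pairs `(y, j)` with `10^(ℓ-1) ≤ y < 10^ℓ - 1` and `1 ≤ j ≤ k - 1` such
that the last `j` digits of `y` are `(b₁, …, b_j)` and the first `k - j` digits of
`y + 1` are `(b_{j+1}, …, b_k)`. -/
def occOSeg {k : ℕ} (B : Fin k → Fin 10) (ℓ : ℕ) : ℕ :=
  ((Finset.Ico (10 ^ (ℓ - 1)) (10 ^ ℓ - 1) ×ˢ Finset.Ico 1 k).filter fun p =>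
    (∀ i : Fin k, (i : ℕ) < p.2 → p.1 / 10 ^ (p.2 - 1 - (i : ℕ)) % 10 = (B i : ℕ)) ∧
    (∀ i : Fin k, p.2 ≤ (i : ℕ) →
      (p.1 + 1) / 10 ^ (ℓ - 1 - ((i : ℕ) - p.2)) % 10 = (B i : ℕ))).card

open Finset

theorem card_filter_Ico_mul_div_mod (P : ℕ → ℕ → Prop) [∀ x, DecidablePred (P x)]
    (a c n : ℕ) :
    #{y ∈ Ico (a * n) (c * n) | P (y / n) (y % n)} =
      #{p ∈ Ico a c ×ˢ range n | P p.1 p.2} := by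
  rcases n.eq_zero_or_pos with rfl | hn
  · simp
  have hdivmod : ∀ x r, r < n → (x * n + r) / n = x ∧ (x * n + r) % n = r := fun x r hr =>
    ⟨by rw [Nat.add_comm, Nat.add_mul_div_right _ _ hn, Nat.div_eq_of_lt hr, Nat.zero_add],
      by rw [Nat.mul_comm, Nat.mul_add_mod, Nat.mod_eq_of_lt hr]⟩
  refine card_nbij' (fun y => (y / n, y % n)) (fun p => p.1 * n + p.2) ?_ ?_ ?_ ?_
  · intro y hy
    simp only [coe_filter, mem_Ico, Set.mem_ofPred_eq, mem_product, mem_range] at hy ⊢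
    exact ⟨⟨⟨(Nat.le_div_iff_mul_le hn).2 hy.1.1, (Nat.div_lt_iff_lt_mul hn).2 hy.1.2⟩,
      Nat.mod_lt _ hn⟩, hy.2⟩
  · rintro ⟨x, r⟩ hp
    simp only [coe_filter, mem_product, mem_Ico, mem_range, Set.mem_ofPred_eq] at hp
    obtain ⟨⟨⟨hax, hxc⟩, hr⟩, hP⟩ := hp
    simp only [coe_filter, mem_Ico, Set.mem_ofPred_eq, (hdivmod x r hr).1, (hdivmod x r hr).2]
    exact ⟨⟨by nlinarith, by nlinarith⟩, hP⟩
  · intro y _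
    exact Nat.div_add_mod' y n
  · rintro ⟨x, r⟩ hp
    have hr : r < n := mem_range.1 (mem_product.1 (mem_filter.1 hp).1).2
    exact Prod.ext (hdivmod x r hr).1 (hdivmod x r hr).2

theorem card_filter_div_Ico_mul (P : ℕ → Prop) [DecidablePred P] (a c n : ℕ) :
    #{y ∈ Ico (a * n) (c * n) | P (y / n)} = #{x ∈ Ico a c | P x} * n := by
  rw [card_filter_Ico_mul_div_mod (fun x _ => P x), filter_product_left, card_product, card_range]

theorem card_filter_mod_Ico_mul (P : ℕ → Prop) [DecidablePred P] (a c n : ℕ) :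
    #{y ∈ Ico (a * n) (c * n) | P (y % n)} = (c - a) * #{r ∈ range n | P r} := by
  rw [card_filter_Ico_mul_div_mod (fun _ r => P r), filter_product_right, card_product,
    Nat.card_Ico]

-- `finFunctionFinEquiv` reads its digits least significant first, hence the `Fin.rev`.
def blockValue {b k : ℕ} (B : Fin k → Fin b) : ℕ := finFunctionFinEquiv (B ∘ Fin.rev)

theorem blockValue_lt {b k : ℕ} (B : Fin k → Fin b) : blockValue B < b ^ k :=
  (finFunctionFinEquiv (B ∘ Fin.rev)).isLt

theorem mod_pow_div_pow_mod {b t k : ℕ} (s : ℕ) (h : t < k) :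
    s % b ^ k / b ^ t % b = s / b ^ t % b := by
  rw [← Nat.mod_mul_right_div_self, ← Nat.mod_mul_right_div_self s, ← pow_succ,
    Nat.mod_mod_of_dvd _ (pow_dvd_pow b h)]

theorem forall_digit_eq_iff_mod_eq_blockValue {b k : ℕ} (B : Fin k → Fin b) (s : ℕ) :
    (∀ i : Fin k, s / b ^ (k - 1 - i) % b = B i) ↔ s % b ^ k = blockValue B := by
  let r : Fin (b ^ k) := ⟨s % b ^ k, Nat.mod_lt _ ((Nat.zero_le _).trans_lt (blockValue_lt B))⟩
  calc (∀ i : Fin k, s / b ^ (k - 1 - i) % b = B i)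
      ↔ ∀ i : Fin k, (finFunctionFinEquiv.symm r i : ℕ) = B i.rev := by
        rw [Fin.rev_surjective.forall]
        refine forall_congr' fun i => ?_
        rw [finFunctionFinEquiv_symm_apply_val, Fin.val_rev, show (r : ℕ) = s % b ^ k from rfl,
          mod_pow_div_pow_mod s i.isLt, show k - 1 - (k - (i + 1)) = i by omega]
    _ ↔ r = finFunctionFinEquiv (B ∘ Fin.rev) := by
        rw [← Equiv.symm_apply_eq, funext_iff]
        simp only [Fin.ext_iff, Function.comp_apply]
    _ ↔ s % b ^ k = blockValue B := Fin.ext_iff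

theorem blockValue_div_pow {b k : ℕ} (hk : 0 < k) (B : Fin k → Fin b) :
    blockValue B / b ^ (k - 1) = B ⟨0, hk⟩ := by
  have hdigit := (forall_digit_eq_iff_mod_eq_blockValue B (blockValue B)).2
    (Nat.mod_eq_of_lt (blockValue_lt B)) ⟨0, hk⟩
  have hlt : blockValue B / b ^ (k - 1) < b := by
    refine Nat.div_lt_of_lt_mul ?_
    rw [← pow_succ, Nat.sub_add_cancel hk]
    exact blockValue_lt B
  rwa [Nat.sub_zero, Nat.mod_eq_of_lt hlt] at hdigit

theorem pow_pred_le_blockValue_iff {b k : ℕ} (hk : 0 < k) (B : Fin k → Fin b) :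
    b ^ (k - 1) ≤ blockValue B ↔ (B ⟨0, hk⟩ : ℕ) ≠ 0 := by
  have hb : 0 < b := (B ⟨0, hk⟩).pos
  rw [← blockValue_div_pow hk, Nat.ne_zero_iff_zero_lt, Nat.div_pos_iff]
  simp [hb]

section PositionCount

variable {b k m : ℕ}

theorem card_filter_div_pow_mod_pow_eq_of_lt (hm : m < b ^ k) {e ℓ : ℕ} (h : e + k < ℓ) :
    #{y ∈ Ico (b ^ (ℓ - 1)) (b ^ ℓ) | y / b ^ e % b ^ k = m} =
      (b - 1) * b ^ (ℓ - k - 1) := by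
  obtain ⟨p, rfl⟩ := Nat.exists_eq_add_of_lt h
  rw [show b ^ (e + k + p + 1 - 1) = b ^ p * b ^ k * b ^ e by
      rw [← pow_add, ← pow_add]; congr 1; omega,
    show b ^ (e + k + p + 1) = b ^ (p + 1) * b ^ k * b ^ e by
      rw [← pow_add, ← pow_add]; congr 1; omega,
    card_filter_div_Ico_mul (· % b ^ k = m), card_filter_mod_Ico_mul (· = m), filter_eq',
    if_pos (mem_range.2 hm), card_singleton, pow_succ', ← Nat.sub_one_mul,
    show e + k + p + 1 - k - 1 = p + e by omega, pow_add]
  ring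

theorem card_filter_div_pow_mod_pow_eq_of_eq (hm : m < b ^ k) (hk : 0 < k) {e ℓ : ℕ}
    (h : e + k = ℓ) :
    #{y ∈ Ico (b ^ (ℓ - 1)) (b ^ ℓ) | y / b ^ e % b ^ k = m} =
      if b ^ (k - 1) ≤ m then b ^ e else 0 := by
  subst h
  rw [show b ^ (e + k - 1) = b ^ (k - 1) * b ^ e by rw [← pow_add]; congr 1; omega,
    pow_add, mul_comm (b ^ e), card_filter_div_Ico_mul (· % b ^ k = m),
    filter_congr fun x hx => by rw [Nat.mod_eq_of_lt (mem_Ico.1 hx).2], filter_eq']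
  by_cases hle : b ^ (k - 1) ≤ m
  · simp [hle, hm]
  · simp [hle]

end PositionCount

theorem occNoSeg_eq_sum {k ℓ : ℕ} (B : Fin k → Fin 10) (hℓ : k ≤ ℓ) :
    occNoSeg B ℓ = ∑ e ∈ range (ℓ - k + 1),
      #{y ∈ Ico (10 ^ (ℓ - 1)) (10 ^ ℓ) | y / 10 ^ e % 10 ^ k = blockValue B} := by
  have hcond : ∀ y j : ℕ, 1 ≤ j → j ≤ ℓ - k + 1 →
      ((∀ i : Fin k, y / 10 ^ (ℓ - (j + i)) % 10 = B i) ↔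
        y / 10 ^ (ℓ - k + 1 - j) % 10 ^ k = blockValue B) := by
    intro y j hj₁ hj₂
    rw [← forall_digit_eq_iff_mod_eq_blockValue]
    refine forall_congr' fun i => ?_
    rw [Nat.div_div_eq_div_mul, ← pow_add,
      show ℓ - k + 1 - j + (k - 1 - i) = ℓ - (j + i) by omega]
  calc occNoSeg B ℓ
      = ∑ j ∈ Icc 1 (ℓ - k + 1),
          #{y ∈ Ico (10 ^ (ℓ - 1)) (10 ^ ℓ) |
            ∀ i : Fin k, y / 10 ^ (ℓ - (j + i)) % 10 = (B i : ℕ)} := by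
        rw [occNoSeg, card_filter, sum_product_right]
        simp only [card_filter]
    _ = ∑ j ∈ Icc 1 (ℓ - k + 1),
          #{y ∈ Ico (10 ^ (ℓ - 1)) (10 ^ ℓ) |
            y / 10 ^ (ℓ - k + 1 - j) % 10 ^ k = blockValue B} := by
        refine sum_congr rfl fun j hj => ?_
        rw [mem_Icc] at hj
        rw [filter_congr fun y _ => hcond y j hj.1 hj.2]
    _ = _ := by
        refine sum_nbij' (ℓ - k + 1 - ·) (ℓ - k + 1 - ·) ?_ ?_ ?_ ?_ fun _ _ => rfl <;>
          intro j hj <;> simp only [mem_Icc, mem_range] at hj ⊢ <;> omega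

/-- Exact count of non-overlapping occurrences of a block `B` of length `k ≥ 1`
within the segment `s_ℓ`, `ℓ ≥ k`: if the first digit `b₁` of `B` is nonzero then
`occ_no(B, s_ℓ) = 10^{ℓ−k} + (ℓ−k)·9·10^{ℓ−k−1}`, and if `b₁ = 0` then
`occ_no(B, s_ℓ) = (ℓ−k)·9·10^{ℓ−k−1}`. -/
theorem occNoSeg_formula (k ℓ : ℕ) (hk : 0 < k) (B : Fin k → Fin 10) (hℓ : k ≤ ℓ) :
    ((B ⟨0, hk⟩ : ℕ) ≠ 0 →
        occNoSeg B ℓ = 10 ^ (ℓ - k) + (ℓ - k) * 9 * 10 ^ (ℓ - k - 1)) ∧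
    ((B ⟨0, hk⟩ : ℕ) = 0 →
        occNoSeg B ℓ = (ℓ - k) * 9 * 10 ^ (ℓ - k - 1)) := by
  have hm := blockValue_lt B
  have hsum : occNoSeg B ℓ = (ℓ - k) * 9 * 10 ^ (ℓ - k - 1) +
      if 10 ^ (k - 1) ≤ blockValue B then 10 ^ (ℓ - k) else 0 := by
    rw [occNoSeg_eq_sum B hℓ, sum_range_succ, sum_congr rfl fun e he =>
        card_filter_div_pow_mod_pow_eq_of_lt hm (by rw [mem_range] at he; omega),
      sum_const, card_range, smul_eq_mul, card_filter_div_pow_mod_pow_eq_of_eq hm hk (by omega),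
      mul_assoc]
  simp only [hsum, pow_pred_le_blockValue_iff hk]
  constructor <;> intro h0 <;> simp [h0, add_comm]
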